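/- Suppose: (a) D is a uniform nonprincipal ultrafilter on an infinite cardinal κ; (b) λ is a regular cardinal with 2^κ < λ; (c) C̄ = ⟨C_α : α < λ⟩ is a sequence such that C_α ⊆ α for each α < λ, sup(C_α) = α for every limit ordinal α < λ, C_β = C_α ∩ β whenever β ∈ C_α, and for every successor ordinal α either C_α is empty or C_α has a last element; (d) the set S = {δ < λ : otp(C_δ) = κ and δ ∉ ⋃_{α<λ} C_α} is stationary in λ; (e) there is a sequence ⟨(a_δ, ξ_δ) : δ ∈ S⟩ such that a_δ ⊆ nacc(C_δ), otp(a_δ) = κ, ξ_δ < 2^κ, and for every function h : λ → 2^κ there is δ ∈ S such that h is constantly ξ_δ on a_δ. Then (λ, λ) ∈ C(D): for every λ⁺-saturated dense linear order J without endpoints, there exist sequences ⟨f_α : α < λ⟩ and ⟨g_α : α < λ⟩ of functions from κ to J that represent a (λ, λ)-cut of J^κ/D. -/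

import Mathlib

/-!
By recursion on `α < λ` choose `f_α < h_α < g_α` pointwise in `J^κ`, with `f` increasing and `g`
decreasing modulo `D`. For `α ∉ S` the triple is taken pointwise inside the triples indexed by
`C_α`; coherence of `C̄` makes these a pointwise chain of fewer than `λ` intervals, so
`λ⁺`-saturation of `J` handles limits. For `δ ∈ S` enumerate `a_δ` as `⟨b_δ(i) : i ∈ κ⟩` and set
`f_δ(i) = h_{b_δ(i)}(i)` or `g_δ(i) = h_{b_δ(i)}(i)` according to whether `i` lies in the set
`A_δ ⊆ κ` coded by `ξ_δ`; by uniformity `b_δ(i)` tends to `δ` along `D`, so `f_δ, g_δ` still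
extend the cut. A filler `h` would yield the colouring `β ↦ code of {i | h(i) < h_β(i)}`, and a
`δ` guessing it gives `{i | h(i) < h_{b_δ(i)}(i)} = A_δ` for every `i`, which contradicts
`f_δ(i) < h(i) < g_δ(i)` at any single `i`.
-/

open Cardinal Set

/-- `f <_D g` : the set of coordinates where `f i < g i` belongs to the ultrafilter `D`. -/
def ltD {ι J : Type} [LinearOrder J] (D : Ultrafilter ι) (f g : ι → J) : Prop :=
  {i | f i < g i} ∈ D

/-- An ultrafilter is nonprincipal iff it contains the complement of every singleton. -/
def Nonprincipal {ι : Type} (D : Ultrafilter ι) : Prop :=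
  ∀ i : ι, ({i}ᶜ : Set ι) ∈ D

/-- `μ`-completeness: any intersection of fewer than `μ` members of `D` belongs to `D`. -/
def IsCompleteUF (μ : Cardinal) {ι : Type} (D : Ultrafilter ι) : Prop :=
  ∀ s : Set (Set ι), #s < μ → (∀ A ∈ s, A ∈ D) → ⋂₀ s ∈ D

/-- A uniform ultrafilter: every member has full cardinality. -/
def IsUniformUF {ι : Type} (D : Ultrafilter ι) : Prop :=
  ∀ A ∈ D, #A = #ι

/-- The sequences `f` (indexed by `T₁`) and `g` (indexed by `T₂`) represent a
`(T₁, T₂)`-cut of the ultrapower `J^ι/D`: `f` is `<_D`-increasing, `g` is `<_D`-decreasing,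
every `f a` is `<_D`-below every `g b`, and no element fills the cut. -/
def RepCut {ι J : Type} [LinearOrder J] {T₁ T₂ : Type} [LinearOrder T₁] [LinearOrder T₂]
    (D : Ultrafilter ι) (f : T₁ → ι → J) (g : T₂ → ι → J) : Prop :=
  (∀ a b : T₁, a < b → ltD D (f a) (f b)) ∧
  (∀ a b : T₂, a < b → ltD D (g b) (g a)) ∧
  (∀ (a : T₁) (b : T₂), ltD D (f a) (g b)) ∧
  ¬∃ h : ι → J, (∀ a : T₁, ltD D (f a) h) ∧ ∀ b : T₂, ltD D h (g b)

/-- `τ⁺`-saturation of a dense linear order: any two sets of size `≤ τ`, one entirely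
below the other, can be separated by a point. -/
def SatPlus (τ : Cardinal) (J : Type) [LinearOrder J] : Prop :=
  ∀ A B : Set J, #A ≤ τ → #B ≤ τ → (∀ a ∈ A, ∀ b ∈ B, a < b) →
    ∃ t : J, (∀ a ∈ A, a < t) ∧ ∀ b ∈ B, t < b

/-- The order type of a set of ordinals. -/
noncomputable def setOtp (C : Set Ordinal.{0}) : Ordinal.{1} :=
  Ordinal.type (Subrel ((· < ·) : Ordinal.{0} → Ordinal.{0} → Prop) (· ∈ C))

/-- `C` is a club (closed unbounded) subset of `l`. -/
def IsClubIn (l : Ordinal) (C : Set Ordinal) : Prop :=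
  C ⊆ Set.Iio l ∧
  (∀ s : Set Ordinal, s ⊆ C → s.Nonempty → sSup s < l → sSup s ∈ C) ∧
  ∀ a < l, ∃ b ∈ C, a < b

/-- `S` is stationary in `l`: it meets every club of `l`. -/
def IsStationaryIn (l : Ordinal) (S : Set Ordinal) : Prop :=
  ∀ C : Set Ordinal, IsClubIn l C → (S ∩ C).Nonempty

/-- The non-accumulation points of a set of ordinals. -/
noncomputable def nacc (C : Set Ordinal) : Set Ordinal :=
  {β ∈ C | sSup (C ∩ Set.Iio β) < β}

section UltrapowerOrder

variable {ι J : Type} [LinearOrder J] {D : Ultrafilter ι} {f g h : ι → J}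

theorem ltD_iff : ltD D f g ↔ ∀ᶠ i in (D : Filter ι), f i < g i := Iff.rfl

theorem ltD_of_forall_lt (hfg : ∀ i, f i < g i) : ltD D f g :=
  Filter.Eventually.of_forall hfg

theorem ltD.trans (hfg : ltD D f g) (hgh : ltD D g h) : ltD D f h := by
  filter_upwards [ltD_iff.1 hfg, ltD_iff.1 hgh] with i using lt_trans

theorem IsUniformUF.compl_mem {X : Set ι} (huni : IsUniformUF D) (hX : #X < #ι) : Xᶜ ∈ D :=
  Ultrafilter.compl_mem_iff_notMem.2 fun hXD => hX.ne (huni X hXD)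

end UltrapowerOrder

theorem Ordinal.exists_forall_of_local_step {X : Type*} [Nonempty X]
    (P : Ordinal.{u} → (Ordinal.{u} → X) → X → Prop)
    (hloc : ∀ α s s' t, (∀ β < α, s β = s' β) → P α s t → P α s' t)
    (hstep : ∀ α s, (∀ β < α, P β s (s β)) → ∃ t, P α s t) :
    ∃ s : Ordinal.{u} → X, ∀ α, P α s (s α) := by
  classical
  let extend (α : Ordinal.{u}) (hist : ∀ β < α, X) (β : Ordinal.{u}) : X :=
    if hβ : β < α then hist β hβ else Classical.arbitrary X
  let s : Ordinal.{u} → X := wellFounded_lt.fix fun α hist =>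
    if H : ∃ t, P α (extend α hist) t then H.choose else Classical.arbitrary X
  have hagree : ∀ α, ∀ β < α, s β = extend α (fun γ _ => s γ) β := fun α β hβ => by
    simp only [extend, dif_pos hβ]
  refine ⟨s, fun α => ?_⟩
  induction α using WellFoundedLT.induction with | _ α ih
  obtain ⟨t, ht⟩ := hstep α s ih
  have H : ∃ t, P α (extend α fun γ _ => s γ) t := ⟨t, hloc α s _ t (hagree α) ht⟩
  have hsα : s α = H.choose := by
    rw [show s α = _ from wellFounded_lt.fix_eq _ α, dif_pos H]
  rw [hsα]
  exact hloc α _ s _ (fun β hβ => (hagree α β hβ).symm) H.choose_spec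

section OrderType

variable {X : Set Ordinal.{0}} {c : Cardinal.{0}}

theorem mk_of_setOtp_eq (hX : setOtp X = Ordinal.lift.{1} c.ord) : #X = Cardinal.lift.{1} c := by
  rw [← Ordinal.card_type (Subrel ((· < ·) : Ordinal → Ordinal → Prop) (· ∈ X)), ← setOtp, hX,
    Cardinal.lift_ord, Cardinal.card_ord]

theorem mk_inter_Iio_lt_of_setOtp_eq (hX : setOtp X = Ordinal.lift.{1} c.ord) {x : Ordinal}
    (hx : x ∈ X) : #(X ∩ Iio x : Set Ordinal) < Cardinal.lift.{1} c := by
  let r := Subrel ((· < ·) : Ordinal → Ordinal → Prop) (· ∈ X)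
  have htypein : Ordinal.typein r ⟨x, hx⟩ < (Cardinal.lift.{1} c).ord := by
    rw [← Cardinal.lift_ord, ← hX]
    exact Ordinal.typein_lt_type r _
  rw [Cardinal.lt_ord, Ordinal.card_typein] at htypein
  refine lt_of_le_of_lt (Cardinal.mk_le_of_injective (f := fun y : ↥(X ∩ Iio x) =>
    (⟨⟨y.1, y.2.1⟩, y.2.2⟩ : {y : X // r y ⟨x, hx⟩})) ?_) htypein
  intro y z hyz
  exact Subtype.ext (congrArg (fun w : {y : X // r y ⟨x, hx⟩} => w.1.1) hyz)

theorem nonempty_of_setOtp_eq (hc : ℵ₀ ≤ c) (hX : setOtp X = Ordinal.lift.{1} c.ord) :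
    X.Nonempty := by
  rw [← Set.nonempty_coe_sort, ← Cardinal.mk_ne_zero_iff, mk_of_setOtp_eq hX]
  exact (Cardinal.lift_eq_zero.not).2 (ne_bot_of_le_ne_bot Cardinal.aleph0_ne_zero hc)

theorem not_exists_max_of_setOtp_eq (hc : ℵ₀ ≤ c) (hX : setOtp X = Ordinal.lift.{1} c.ord) :
    ¬ ∃ m ∈ X, ∀ y ∈ X, y ≤ m := by
  rintro ⟨m, hm, hmax⟩
  have hc' : ℵ₀ ≤ Cardinal.lift.{1} c := by simpa using hc
  have hsub : X ⊆ insert m (X ∩ Iio m) := fun y hy =>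
    (hmax y hy).eq_or_lt.imp id fun hlt => ⟨hy, hlt⟩
  have hlt : #X < Cardinal.lift.{1} c :=
    calc #X ≤ #(insert m (X ∩ Iio m) : Set Ordinal) := Cardinal.mk_le_mk_of_subset hsub
      _ ≤ #(X ∩ Iio m : Set Ordinal) + 1 := Cardinal.mk_insert_le
      _ < Cardinal.lift.{1} c := Cardinal.add_lt_of_lt hc' (mk_inter_Iio_lt_of_setOtp_eq hX hm)
          (Cardinal.one_lt_aleph0.trans_le hc')
  exact hlt.ne (mk_of_setOtp_eq hX)

theorem eventually_lt_of_injective {ι : Type} {D : Ultrafilter ι} (huni : IsUniformUF D)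
    (hX : setOtp X = Ordinal.lift.{1} (#ι).ord) {e : ι → Ordinal} (he : Function.Injective e)
    (heX : ∀ i, e i ∈ X) {x β : Ordinal} (hx : x ∈ X) (hβx : β < x) :
    ∀ᶠ i in (D : Filter ι), β < e i := by
  have hsmall : #{i | e i ≤ β} < #ι := by
    have hinj : Function.Injective fun i : {i | e i ≤ β} =>
        (⟨e i, heX i, i.2.trans_lt hβx⟩ : ↥(X ∩ Iio x)) :=
      fun i j hij => Subtype.ext (he (congrArg Subtype.val hij))
    have := (Cardinal.lift_mk_le_lift_mk_of_injective hinj).trans_lt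
      ((Cardinal.lift_uzero _).trans_lt (mk_inter_Iio_lt_of_setOtp_eq hX hx))
    exact Cardinal.lift_lt.1 this
  filter_upwards [huni.compl_mem hsmall] with i hi using not_le.1 hi

end OrderType

theorem exists_injective_mem_of_setOtp_eq {ι : Type} {X : Set Ordinal.{0}}
    (hX : setOtp X = Ordinal.lift.{1} (#ι).ord) :
    ∃ e : ι → Ordinal.{0}, Function.Injective e ∧ ∀ i, e i ∈ X := by
  obtain ⟨f⟩ := Cardinal.lift_mk_eq'.1 (by rw [Cardinal.lift_uzero, mk_of_setOtp_eq hX] :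
    Cardinal.lift.{1} #ι = Cardinal.lift.{0} #X)
  exact ⟨fun i => f i, Subtype.val_injective.comp f.injective, fun i => (f i).2⟩

theorem exists_injective_lt_ord (α : Type) :
    ∃ e : α → Ordinal.{0}, Function.Injective e ∧ ∀ x, e x < (#α).ord := by
  obtain ⟨r, _, hr⟩ := Cardinal.exists_ord_eq α
  exact ⟨Ordinal.typein r, Ordinal.typein_injective r, fun x => hr ▸ Ordinal.typein_lt_type r x⟩

structure IsSquareSeq (Λ : Ordinal.{0}) (C : Ordinal.{0} → Set Ordinal.{0}) : Prop where
  subset_Iio : ∀ α < Λ, C α ⊆ Iio α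
  sSup_eq : ∀ α < Λ, Order.IsSuccLimit α → sSup (C α) = α
  coherent : ∀ α < Λ, ∀ β ∈ C α, C β = C α ∩ Iio β
  succ_cases : ∀ α < Λ, (∃ γ, α = Order.succ γ) → C α = ∅ ∨ ∃ m ∈ C α, ∀ x ∈ C α, x ≤ m

namespace IsSquareSeq

variable {Λ α : Ordinal.{0}} {C : Ordinal.{0} → Set Ordinal.{0}}

theorem exists_mem_gt (hC : IsSquareSeq Λ C) (hα : α < Λ) (hlim : Order.IsSuccLimit α)
    {γ : Ordinal} (hγ : γ < α) : ∃ β ∈ C α, γ < β := by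
  by_contra! hle
  exact (hC.sSup_eq α hα hlim ▸ csSup_le' hle).not_gt hγ

theorem isSuccLimit_of_setOtp_eq (hC : IsSquareSeq Λ C) (hα : α < Λ) {c : Cardinal.{0}}
    (hc : ℵ₀ ≤ c) (hotp : setOtp (C α) = Ordinal.lift.{1} c.ord) : Order.IsSuccLimit α := by
  obtain ⟨y, hy⟩ := nonempty_of_setOtp_eq hc hotp
  rcases Ordinal.zero_or_succ_or_isSuccLimit α with rfl | ⟨γ, rfl⟩ | hlim
  · exact absurd (hC.subset_Iio 0 hα hy) (not_lt_bot (a := y))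
  · rcases hC.succ_cases _ hα ⟨γ, rfl⟩ with hempty | hmax
    · exact absurd (hempty ▸ hy) (Set.notMem_empty y)
    · exact absurd hmax (not_exists_max_of_setOtp_eq hc hotp)
  · exact hlim

theorem mem_of_mem_of_lt (hC : IsSquareSeq Λ C) (hα : α < Λ) {β γ : Ordinal} (hβ : β ∈ C α)
    (hγ : γ ∈ C α) (hγβ : γ < β) : γ ∈ C β := by
  rw [hC.coherent α hα β hβ]
  exact ⟨hγ, hγβ⟩

end IsSquareSeq

structure CutTriple (ι J : Type) where
  lo : ι → J
  mid : ι → J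
  hi : ι → J

namespace CutTriple

variable {ι J : Type} [LinearOrder J]

instance [Nonempty J] : Nonempty (CutTriple ι J) :=
  let ⟨j⟩ := ‹Nonempty J›
  ⟨⟨fun _ => j, fun _ => j, fun _ => j⟩⟩

def Inside (t u : CutTriple ι J) : Prop :=
  u.lo ≤ t.lo ∧ t.hi ≤ u.hi

theorem Inside.refl (t : CutTriple ι J) : t.Inside t :=
  ⟨le_rfl, le_rfl⟩

theorem Inside.trans {t u v : CutTriple ι J} (htu : t.Inside u) (huv : u.Inside v) :
    t.Inside v :=
  ⟨huv.1.trans htu.1, htu.2.trans huv.2⟩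

theorem exists_inside_ltD [DenselyOrdered J] {D : Ultrafilter ι} (p u : CutTriple ι J)
    (hp_lo : ∀ i, p.lo i < p.mid i) (hp_hi : ∀ i, p.mid i < p.hi i) (hu : ∀ i, u.lo i < u.hi i)
    (hpu : ∀ᶠ i in (D : Filter ι), u.lo i ≤ p.lo i ∧ p.hi i ≤ u.hi i) :
    ∃ t : CutTriple ι J, t.Inside u ∧ ltD D p.lo t.lo ∧ ltD D t.hi p.hi ∧
      (∀ i, t.lo i < t.mid i) ∧ ∀ i, t.mid i < t.hi i := by
  classical
  set W := {i | u.lo i ≤ p.lo i ∧ p.hi i ≤ u.hi i}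
  choose H hH_mid hH_hi using fun i => exists_between (hp_hi i)
  let lo := W.piecewise p.mid u.lo
  let hi := W.piecewise H u.hi
  have hlo_hi : ∀ i, lo i < hi i := fun i => by
    by_cases hiW : i ∈ W
    · simpa [lo, hi, hiW] using hH_mid i
    · simpa [lo, hi, hiW] using hu i
  choose mid hlo_mid hmid_hi using fun i => exists_between (hlo_hi i)
  refine ⟨⟨lo, mid, hi⟩, ⟨fun i => ?_, fun i => ?_⟩, ?_, ?_, hlo_mid, hmid_hi⟩
  · by_cases hiW : i ∈ W
    · simpa [lo, hiW] using (hiW.1.trans_lt (hp_lo i)).le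
    · simp [lo, hiW]
  · by_cases hiW : i ∈ W
    · simpa [hi, hiW] using ((hH_hi i).trans_le hiW.2).le
    · simp [hi, hiW]
  · filter_upwards [hpu] with i hiW
    simpa [lo, show i ∈ W from hiW] using hp_lo i
  · filter_upwards [hpu] with i hiW
    simpa [hi, show i ∈ W from hiW] using hH_hi i

end CutTriple

/-- The requirements on the `α`-th triple `t` given the earlier ones `s`: `t.lo`, `t.mid`,
`t.hi` are `f_α`, `h_α`, `g_α` of the construction, `b α` lists `a_α` injectively, and
`A α ⊆ ι` is the set coded by `ξ_α`. -/
structure IsStage {ι J : Type} [LinearOrder J] (D : Ultrafilter ι)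
    (C : Ordinal.{0} → Set Ordinal.{0}) (S : Set Ordinal.{0}) (A : Ordinal.{0} → Set ι)
    (b : Ordinal.{0} → ι → Ordinal.{0}) (s : Ordinal.{0} → CutTriple ι J) (α : Ordinal.{0})
    (t : CutTriple ι J) : Prop where
  lo_lt : ∀ γ < α, ltD D (s γ).lo t.lo
  hi_lt : ∀ γ < α, ltD D t.hi (s γ).hi
  lo_lt_mid : ∀ i, t.lo i < t.mid i
  mid_lt_hi : ∀ i, t.mid i < t.hi i
  inside : α ∉ S → ∀ γ ∈ C α, t.Inside (s γ)
  lo_eq : α ∈ S → ∀ i ∈ A α, t.lo i = (s (b α i)).mid i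
  hi_eq : α ∈ S → ∀ i ∉ A α, t.hi i = (s (b α i)).mid i

namespace IsStage

variable {ι J : Type} [LinearOrder J] {D : Ultrafilter ι} {C : Ordinal.{0} → Set Ordinal.{0}}
  {S : Set Ordinal.{0}} {A : Ordinal.{0} → Set ι} {b : Ordinal.{0} → ι → Ordinal.{0}}
  {s : Ordinal.{0} → CutTriple ι J} {α : Ordinal.{0}} {t : CutTriple ι J}

theorem lo_lt_hi (ht : IsStage D C S A b s α t) (i : ι) : t.lo i < t.hi i :=
  (ht.lo_lt_mid i).trans (ht.mid_lt_hi i)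

theorem congr {s' : Ordinal.{0} → CutTriple ι J} (hαC : C α ⊆ Iio α)
    (hb : α ∈ S → ∀ i, b α i < α) (hss' : ∀ β < α, s β = s' β)
    (ht : IsStage D C S A b s α t) : IsStage D C S A b s' α t where
  lo_lt γ hγ := hss' γ hγ ▸ ht.lo_lt γ hγ
  hi_lt γ hγ := hss' γ hγ ▸ ht.hi_lt γ hγ
  lo_lt_mid := ht.lo_lt_mid
  mid_lt_hi := ht.mid_lt_hi
  inside hαS γ hγ := hss' γ (hαC hγ) ▸ ht.inside hαS γ hγ
  lo_eq hαS i hi := hss' _ (hb hαS i) ▸ ht.lo_eq hαS i hi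
  hi_eq hαS i hi := hss' _ (hb hαS i) ▸ ht.hi_eq hαS i hi

end IsStage

theorem SatPlus.exists_lt_lt {τ : Cardinal.{0}} {J : Type} [LinearOrder J] (hJ : SatPlus τ J)
    (hτ : τ ≠ 0) {A B : Set J} (hA : #A ≤ τ) (hB : #B ≤ τ) (hAB : ∀ a ∈ A, ∀ b ∈ B, a < b) :
    ∃ x y, x < y ∧ (∀ a ∈ A, a < x) ∧ ∀ b ∈ B, y < b := by
  obtain ⟨y, hAy, hyB⟩ := hJ A B hA hB hAB
  have hy : #({y} : Set J) ≤ τ := by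
    rw [Cardinal.mk_singleton]
    exact Cardinal.one_le_iff_ne_zero.2 hτ
  obtain ⟨x, hAx, hxy⟩ := hJ A {y} hA hy fun a ha _ hb => hb ▸ hAy a ha
  exact ⟨x, y, hxy y rfl, hAx, hyB⟩

theorem mk_image_le_of_lt_ord {J : Type} {lam : Cardinal.{0}} {α : Ordinal.{0}}
    (hα : α < lam.ord) {X : Set Ordinal.{0}} (hX : X ⊆ Iio α) (F : Ordinal.{0} → J) :
    #(F '' X) ≤ lam := by
  have hlift : Cardinal.lift.{1} #(F '' X) ≤ Cardinal.lift.{1} α.card :=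
    calc Cardinal.lift.{1} #(F '' X) ≤ Cardinal.lift.{0} #X := Cardinal.mk_image_le_lift
      _ ≤ #(Iio α) := by simpa using Cardinal.mk_le_mk_of_subset hX
      _ = Cardinal.lift.{1} α.card := Cardinal.mk_Iio_ordinal α
  exact (Cardinal.lift_le.1 hlift).trans (Cardinal.lt_ord.1 hα).le

section Stages

variable {ι J : Type} [LinearOrder J] {D : Ultrafilter ι} {C : Ordinal.{0} → Set Ordinal.{0}}
  {S : Set Ordinal.{0}} {A : Ordinal.{0} → Set ι} {b : Ordinal.{0} → ι → Ordinal.{0}}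
  {s : Ordinal.{0} → CutTriple ι J} {α : Ordinal.{0}}

theorem exists_stage_zero [NoMaxOrder J] [Nonempty J] (hC : C 0 ⊆ Iio 0) (hS : 0 ∉ S) :
    ∃ t, IsStage D C S A b s 0 t := by
  obtain ⟨j₀⟩ := ‹Nonempty J›
  obtain ⟨j₁, hj₁⟩ := exists_gt j₀
  obtain ⟨j₂, hj₂⟩ := exists_gt j₁
  exact ⟨⟨fun _ => j₀, fun _ => j₁, fun _ => j₂⟩,
    { lo_lt := fun γ hγ => absurd hγ (not_lt_bot (a := γ))
      hi_lt := fun γ hγ => absurd hγ (not_lt_bot (a := γ))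
      lo_lt_mid := fun _ => hj₁
      mid_lt_hi := fun _ => hj₂
      inside := fun _ γ hγ => absurd (hC hγ) (not_lt_bot (a := γ))
      lo_eq := fun h => absurd h hS
      hi_eq := fun h => absurd h hS }⟩

theorem exists_stage_succ [DenselyOrdered J] {γ₀ β : Ordinal.{0}} (hα : α = Order.succ γ₀)
    (hS : α ∉ S) (hs : ∀ β < α, IsStage D C S A b s β (s β)) (hβ : β ≤ γ₀)
    (hCβ : ∀ γ ∈ C α, (s β).Inside (s γ)) :
    ∃ t, IsStage D C S A b s α t := by
  have hγ₀ : γ₀ < α := hα ▸ Order.lt_succ γ₀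
  have hstage := hs γ₀ hγ₀
  have hβγ₀ : ∀ᶠ i in (D : Filter ι), (s β).lo i ≤ (s γ₀).lo i ∧ (s γ₀).hi i ≤ (s β).hi i := by
    rcases hβ.eq_or_lt with rfl | hlt
    · exact Filter.Eventually.of_forall fun i => ⟨le_rfl, le_rfl⟩
    · filter_upwards [hstage.lo_lt β hlt, hstage.hi_lt β hlt] with i h₁ h₂ using ⟨h₁.le, h₂.le⟩
  obtain ⟨t, htβ, hlo, hhi, hlo_mid, hmid_hi⟩ := CutTriple.exists_inside_ltD (s γ₀) (s β)
    hstage.lo_lt_mid hstage.mid_lt_hi (hs β (hβ.trans_lt hγ₀)).lo_lt_hi hβγ₀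
  have hle : ∀ γ < α, γ ≤ γ₀ := fun γ hγ => Order.lt_succ_iff.1 (hα ▸ hγ)
  refine ⟨t, fun γ hγ => ?_, fun γ hγ => ?_, hlo_mid, hmid_hi,
    fun _ γ hγ => htβ.trans (hCβ γ hγ), fun h => absurd h hS, fun h => absurd h hS⟩
  · rcases (hle γ hγ).eq_or_lt with rfl | hlt
    exacts [hlo, (hstage.lo_lt γ hlt).trans hlo]
  · rcases (hle γ hγ).eq_or_lt with rfl | hlt
    exacts [hhi, hhi.trans (hstage.hi_lt γ hlt)]


theorem exists_stage_limit [DenselyOrdered J] {lam : Cardinal.{0}} (hsat : SatPlus lam J)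
    (hα : α < lam.ord) (hS : α ∉ S) (hs : ∀ β < α, IsStage D C S A b s β (s β))
    (hαC : C α ⊆ Iio α) (hcof : ∀ γ < α, ∃ β ∈ C α, γ < β)
    (hnest : ∀ β ∈ C α, ∀ γ ∈ C α, γ < β → (s β).Inside (s γ)) :
    ∃ t, IsStage D C S A b s α t := by
  have hsep : ∀ i, ∀ x ∈ (fun β => (s β).lo i) '' C α, ∀ y ∈ (fun β => (s β).hi i) '' C α,
      x < y := by
    rintro i _ ⟨β, hβ, rfl⟩ _ ⟨γ, hγ, rfl⟩
    rcases lt_trichotomy β γ with hβγ | rfl | hγβ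
    · exact ((hnest γ hγ β hβ hβγ).1 i).trans_lt ((hs γ (hαC hγ)).lo_lt_hi i)
    · exact (hs β (hαC hβ)).lo_lt_hi i
    · exact ((hs β (hαC hβ)).lo_lt_hi i).trans_le ((hnest β hβ γ hγ hγβ).2 i)
  have hlam : lam ≠ 0 := by
    rintro rfl
    simp at hα
  choose lo hi hlo_hi hlo hhi using fun i => hsat.exists_lt_lt hlam
    (mk_image_le_of_lt_ord hα hαC _) (mk_image_le_of_lt_ord hα hαC _) (hsep i)
  choose mid hlo_mid hmid_hi using fun i => exists_between (hlo_hi i)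
  refine ⟨⟨lo, mid, hi⟩, fun γ hγ => ?_, fun γ hγ => ?_, hlo_mid, hmid_hi,
    fun _ γ hγ => ⟨fun i => (hlo i _ ⟨γ, hγ, rfl⟩).le, fun i => (hhi i _ ⟨γ, hγ, rfl⟩).le⟩,
    fun h => absurd h hS, fun h => absurd h hS⟩
  · obtain ⟨β, hβ, hγβ⟩ := hcof γ hγ
    exact ((hs β (hαC hβ)).lo_lt γ hγβ).trans (ltD_of_forall_lt fun i => hlo i _ ⟨β, hβ, rfl⟩)
  · obtain ⟨β, hβ, hγβ⟩ := hcof γ hγ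
    exact (ltD_of_forall_lt fun i => hhi i _ ⟨β, hβ, rfl⟩).trans ((hs β (hαC hβ)).hi_lt γ hγβ)

theorem exists_stage_of_mem [DenselyOrdered J] (hS : α ∈ S)
    (hs : ∀ β < α, IsStage D C S A b s β (s β)) (hαC : C α ⊆ Iio α)
    (hcof : ∀ γ < α, ∃ β ∈ C α, γ < β)
    (hnest : ∀ β ∈ C α, ∀ γ ∈ C α, γ < β → (s β).Inside (s γ))
    (hb_mem : ∀ i, b α i ∈ C α) (hb_large : ∀ β < α, ∀ᶠ i in (D : Filter ι), β < b α i) :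
    ∃ t, IsStage D C S A b s α t := by
  classical
  have hpinned : ∀ i, ∃ l h, (s (b α i)).lo i < l ∧ l < h ∧ h < (s (b α i)).hi i ∧
      (i ∈ A α → l = (s (b α i)).mid i) ∧ (i ∉ A α → h = (s (b α i)).mid i) := fun i => by
    have hstage := hs _ (hαC (hb_mem i))
    by_cases hi : i ∈ A α
    · obtain ⟨h, h₁, h₂⟩ := exists_between (hstage.mid_lt_hi i)
      exact ⟨_, h, hstage.lo_lt_mid i, h₁, h₂, fun _ => rfl, fun h => absurd hi h⟩
    · obtain ⟨l, l₁, l₂⟩ := exists_between (hstage.lo_lt_mid i)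
      exact ⟨l, _, l₁, l₂, hstage.mid_lt_hi i, fun h => absurd h hi, fun _ => rfl⟩
  choose lo hi hlo hlo_hi hhi hlo_eq hhi_eq using hpinned
  choose mid hlo_mid hmid_hi using fun i => exists_between (hlo_hi i)
  refine ⟨⟨lo, mid, hi⟩, fun γ hγ => ?_, fun γ hγ => ?_, hlo_mid, hmid_hi,
    fun h => absurd hS h, fun _ => hlo_eq, fun _ => hhi_eq⟩
  · obtain ⟨β, hβ, hγβ⟩ := hcof γ hγ
    filter_upwards [(hs β (hαC hβ)).lo_lt γ hγβ, hb_large β (hαC hβ)] with i h₁ h₂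
    exact h₁.trans (((hnest _ (hb_mem i) β hβ h₂).1 i).trans_lt (hlo i))
  · obtain ⟨β, hβ, hγβ⟩ := hcof γ hγ
    filter_upwards [(hs β (hαC hβ)).hi_lt γ hγβ, hb_large β (hαC hβ)] with i h₁ h₂
    exact ((hhi i).trans_le ((hnest _ (hb_mem i) β hβ h₂).2 i)).trans h₁

end Stages

section Construction

variable {ι J : Type} [LinearOrder J] {D : Ultrafilter ι} {C : Ordinal.{0} → Set Ordinal.{0}}
  {S : Set Ordinal.{0}} {A : Ordinal.{0} → Set ι} {b : Ordinal.{0} → ι → Ordinal.{0}}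
  {s : Ordinal.{0} → CutTriple ι J}

theorem exists_stages [DenselyOrdered J] [NoMaxOrder J] [Nonempty J] {lam : Cardinal.{0}}
    (hsat : SatPlus lam J) (hC : IsSquareSeq lam.ord C) (hCS : ∀ α < lam.ord, ∀ β ∈ C α, β ∉ S)
    (hS_lim : ∀ δ ∈ S, Order.IsSuccLimit δ) (hb_mem : ∀ δ ∈ S, ∀ i, b δ i ∈ C δ)
    (hb_large : ∀ δ ∈ S, ∀ β < δ, ∀ᶠ i in (D : Filter ι), β < b δ i) :
    ∃ s : Ordinal.{0} → CutTriple ι J, ∀ α < lam.ord, IsStage D C S A b s α (s α) := by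
  refine Ordinal.exists_forall_of_local_step (fun α s t => α < lam.ord → IsStage D C S A b s α t)
    (fun α s s' t hss' ht hα => (ht hα).congr (hC.subset_Iio α hα)
      (fun hαS i => hC.subset_Iio α hα (hb_mem α hαS i)) hss') fun α s hs => ?_
  by_cases hα : α < lam.ord
  swap
  · exact ⟨Classical.arbitrary _, fun h => absurd h hα⟩
  have hs' : ∀ β < α, IsStage D C S A b s β (s β) := fun β hβ => hs β hβ (hβ.trans hα)
  have hαC := hC.subset_Iio α hα
  have hnest : ∀ β ∈ C α, ∀ γ ∈ C α, γ < β → (s β).Inside (s γ) := fun β hβ γ hγ hγβ =>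
    (hs' β (hαC hβ)).inside (hCS α hα β hβ) γ (hC.mem_of_mem_of_lt hα hβ hγ hγβ)
  suffices ∃ t, IsStage D C S A b s α t from this.imp fun _ ht _ => ht
  by_cases hαS : α ∈ S
  · exact exists_stage_of_mem hαS hs' hαC (fun γ => hC.exists_mem_gt hα (hS_lim α hαS)) hnest
      (hb_mem α hαS) (hb_large α hαS)
  rcases Ordinal.zero_or_succ_or_isSuccLimit α with rfl | ⟨γ₀, rfl⟩ | hlim
  · exact exists_stage_zero hαC hαS
  · rcases hC.succ_cases _ hα ⟨γ₀, rfl⟩ with hempty | ⟨m, hm, hmax⟩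
    · exact exists_stage_succ rfl hαS hs' le_rfl fun γ hγ => absurd (hempty ▸ hγ) (notMem_empty γ)
    · refine exists_stage_succ rfl hαS hs' (Order.lt_succ_iff.1 (hαC hm)) fun γ hγ => ?_
      rcases (hmax γ hγ).eq_or_lt with rfl | hγm
      exacts [.refl _, hnest m hm γ hγ hγm]
  · exact exists_stage_limit hsat hα hαS hs' hαC (fun γ => hC.exists_mem_gt hα hlim) hnest

theorem IsStage.not_ltD_and_ltD {δ : Ordinal.{0}} (hδ : IsStage D C S A b s δ (s δ))
    (hδS : δ ∈ S) {h : ι → J} (hA : ∀ i, {j | h j < (s (b δ i)).mid j} = A δ) :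
    ¬ (ltD D (s δ).lo h ∧ ltD D h (s δ).hi) := by
  rintro ⟨hlo, hhi⟩
  obtain ⟨i, hi_lo, hi_hi⟩ := ((ltD_iff.1 hlo).and (ltD_iff.1 hhi)).exists
  by_cases hiA : i ∈ A δ
  · rw [hδ.lo_eq hδS i hiA] at hi_lo
    exact hi_lo.not_gt (show i ∈ {j | h j < (s (b δ i)).mid j} from hA i ▸ hiA)
  · rw [hδ.hi_eq hδS i hiA] at hi_hi
    exact hiA (hA i ▸ hi_hi)

theorem repCut_of_stages {T : Type} [LinearOrder T] {Λ : Ordinal.{0}} (e : T ≃o Iio Λ)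
    (hs : ∀ α < Λ, IsStage D C S A b s α (s α))
    (hfill : ∀ h : ι → J, ∃ δ < Λ, ¬ (ltD D (s δ).lo h ∧ ltD D h (s δ).hi)) :
    RepCut D (fun x => (s (e x)).lo) (fun x => (s (e x)).hi) := by
  have hcross : ∀ β < Λ, ∀ γ < Λ, ltD D (s β).lo (s γ).hi := fun β hβ γ hγ => by
    rcases lt_trichotomy β γ with hβγ | rfl | hγβ
    · exact ((hs γ hγ).lo_lt β hβγ).trans (ltD_of_forall_lt (hs γ hγ).lo_lt_hi)
    · exact ltD_of_forall_lt (hs β hβ).lo_lt_hi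
    · exact (ltD_of_forall_lt (hs β hβ).lo_lt_hi).trans ((hs β hβ).hi_lt γ hγβ)
  refine ⟨fun x y hxy => (hs _ (e y).2).lo_lt _ (e.lt_iff_lt.2 hxy),
    fun x y hxy => (hs _ (e y).2).hi_lt _ (e.lt_iff_lt.2 hxy),
    fun x y => hcross _ (e x).2 _ (e y).2, ?_⟩
  rintro ⟨h, hlo, hhi⟩
  obtain ⟨δ, hδ, hnot⟩ := hfill h
  have heδ : (e (e.symm ⟨δ, hδ⟩) : Ordinal) = δ := by rw [e.apply_symm_apply]
  exact hnot ⟨heδ ▸ hlo (e.symm ⟨δ, hδ⟩), heδ ▸ hhi (e.symm ⟨δ, hδ⟩)⟩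

end Construction

theorem symmetric_cut_of_square_diamond_general
    {ι : Type} [Infinite ι] (D : Ultrafilter ι)
    (huni : IsUniformUF D)
    (lam : Cardinal)
    (C : Ordinal → Set Ordinal)
    (hC1 : ∀ α < lam.ord, C α ⊆ Set.Iio α)
    (hC2 : ∀ α < lam.ord, Order.IsSuccLimit α → sSup (C α) = α)
    (hC3 : ∀ α < lam.ord, ∀ β ∈ C α, C β = C α ∩ Set.Iio β)
    (hC4 : ∀ α < lam.ord, (∃ γ, α = Order.succ γ) →
      C α = ∅ ∨ ∃ m ∈ C α, ∀ x ∈ C α, x ≤ m)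
    (S : Set Ordinal)
    (hSdef : S = {δ | δ < lam.ord ∧ setOtp (C δ) = Ordinal.lift.{1} (#ι).ord ∧
      ∀ α < lam.ord, δ ∉ C α})
    (a : Ordinal → Set Ordinal) (ξ : Ordinal → Ordinal)
    (ha1 : ∀ δ ∈ S, a δ ⊆ nacc (C δ))
    (ha2 : ∀ δ ∈ S, setOtp (a δ) = Ordinal.lift.{1} (#ι).ord)
    (ha4 : ∀ h : Ordinal → Ordinal, (∀ α < lam.ord, h α < (((2 : Cardinal) ^ #ι)).ord) →
      ∃ δ ∈ S, ∀ β ∈ a δ, h β = ξ δ)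
    (J : Type) [LinearOrder J] [DenselyOrdered J] [NoMaxOrder J] [Nonempty J]
    (hsat : SatPlus lam J) :
    ∃ f g : lam.ord.ToType → ι → J, RepCut D f g := by
  have hC : IsSquareSeq lam.ord C := ⟨hC1, hC2, hC3, hC4⟩
  have hS : ∀ δ ∈ S, δ < lam.ord ∧ setOtp (C δ) = Ordinal.lift.{1} (#ι).ord := by
    rw [hSdef]
    exact fun δ hδ => ⟨hδ.1, hδ.2.1⟩
  have hCS : ∀ α < lam.ord, ∀ β ∈ C α, β ∉ S := by
    rw [hSdef]
    exact fun α hα β hβ hβS => hβS.2.2 α hα hβ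
  have hS_lim : ∀ δ ∈ S, Order.IsSuccLimit δ := fun δ hδ =>
    hC.isSuccLimit_of_setOtp_eq (hS δ hδ).1 (Cardinal.aleph0_le_mk ι) (hS δ hδ).2
  have haC : ∀ δ ∈ S, a δ ⊆ C δ := fun δ hδ _ hx => (ha1 δ hδ hx).1
  choose b hb using fun δ => (em (δ ∈ S)).elim
    (fun hδ => (exists_injective_mem_of_setOtp_eq (ha2 δ hδ)).imp fun _ he _ => he)
    fun hδ => ⟨0, fun h => absurd h hδ⟩
  obtain ⟨enc, henc, henc_lt⟩ := exists_injective_lt_ord (Set ι)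
  obtain ⟨s, hs⟩ := exists_stages (D := D) (A := fun δ => Function.invFun enc (ξ δ)) hsat hC
    hCS hS_lim (fun δ hδ i => haC δ hδ ((hb δ hδ).2 i)) fun δ hδ β hβ => by
      obtain ⟨x, hx, hβx⟩ := hC.exists_mem_gt (hS δ hδ).1 (hS_lim δ hδ) hβ
      exact eventually_lt_of_injective huni (hS δ hδ).2 (hb δ hδ).1
        (fun i => haC δ hδ ((hb δ hδ).2 i)) hx hβx
  refine ⟨_, _, repCut_of_stages Ordinal.ToType.mk.symm hs fun h => ?_⟩
  obtain ⟨δ, hδS, hguess⟩ := ha4 (fun β => enc {j | h j < (s β).mid j})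
    fun _ _ => Cardinal.mk_set (α := ι) ▸ henc_lt _
  refine ⟨δ, (hS δ hδS).1, (hs δ (hS δ hδS).1).not_ltD_and_ltD hδS fun i => ?_⟩
  rw [← hguess _ ((hb δ hδS).2 i)]
  exact (Function.leftInverse_invFun henc _).symm

/-- Theorem 3.3: from a uniform nonprincipal ultrafilter `D` on `κ = #ι`, a
regular `λ > 2^κ`, a coherent square-like sequence `C̄`, a stationary set `S` of points of
order type `κ` avoided by all `C_α`, and a diamond-like guessing sequence `⟨(a_δ, ξ_δ)⟩`,
one gets `(λ, λ) ∈ C(D)`. -/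
theorem symmetric_cut_of_square_diamond
    {ι : Type} [Infinite ι] (D : Ultrafilter ι) (hD : Nonprincipal D)
    (huni : IsUniformUF D)
    (lam : Cardinal) (hlam : lam.IsRegular) (hbig : 2 ^ #ι < lam)
    (C : Ordinal → Set Ordinal)
    (hC1 : ∀ α < lam.ord, C α ⊆ Set.Iio α)
    (hC2 : ∀ α < lam.ord, Order.IsSuccLimit α → sSup (C α) = α)
    (hC3 : ∀ α < lam.ord, ∀ β ∈ C α, C β = C α ∩ Set.Iio β)
    (hC4 : ∀ α < lam.ord, (∃ γ, α = Order.succ γ) →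
      C α = ∅ ∨ ∃ m ∈ C α, ∀ x ∈ C α, x ≤ m)
    (S : Set Ordinal)
    (hSdef : S = {δ | δ < lam.ord ∧ setOtp (C δ) = Ordinal.lift.{1} (#ι).ord ∧
      ∀ α < lam.ord, δ ∉ C α})
    (hstat : IsStationaryIn lam.ord S)
    (a : Ordinal → Set Ordinal) (ξ : Ordinal → Ordinal)
    (ha1 : ∀ δ ∈ S, a δ ⊆ nacc (C δ))
    (ha2 : ∀ δ ∈ S, setOtp (a δ) = Ordinal.lift.{1} (#ι).ord)
    (ha3 : ∀ δ ∈ S, ξ δ < (((2 : Cardinal) ^ #ι)).ord)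
    (ha4 : ∀ h : Ordinal → Ordinal, (∀ α < lam.ord, h α < (((2 : Cardinal) ^ #ι)).ord) →
      ∃ δ ∈ S, ∀ β ∈ a δ, h β = ξ δ)
    (J : Type) [LinearOrder J] [DenselyOrdered J] [NoMinOrder J] [NoMaxOrder J] [Nonempty J]
    (hsat : SatPlus lam J) :
    ∃ f g : lam.ord.ToType → ι → J, RepCut D f g :=
  symmetric_cut_of_square_diamond_general D huni lam C hC1 hC2 hC3 hC4 S hSdef a ξ ha1 ha2 ha4 J
    hsat
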